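/- arXiv:cs/0207008 — 16 statements merged into one kernel-verified Lean document; each statement's English description precedes it below -/
import Mathlib

section
/- The goal modality does not distribute over implication: there exist propositional formulas φ, ψ and a mental state ⟨Σ,Γ⟩ such that ⟨Σ,Γ⟩ ⊨_M G(φ→ψ) and ⟨Σ,Γ⟩ ⊨_M Gφ but ⟨Σ,Γ⟩ ⊭_M Gψ; hence the schema G(φ→ψ) → (Gφ → Gψ) is not valid (⊭_M G(φ→ψ) → (Gφ → Gψ)). -/
/- Core: propositional language, classical entailment, mental states,
   mental state formulas and their semantics. -/

inductive PForm : Type where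
  | atom : Nat → PForm
  | fals : PForm
  | impl : PForm → PForm → PForm

namespace PForm

def neg (p : PForm) : PForm := p.impl PForm.fals

def conj (p q : PForm) : PForm := (p.impl q.neg).neg

def iffF (p q : PForm) : PForm := (p.impl q).conj (q.impl p)

def eval (v : Nat → Bool) : PForm → Bool
  | atom n => v n
  | fals => false
  | impl p q => !(p.eval v) || q.eval v

end PForm

/-- Classical semantic entailment `Γ ⊨_C φ`. -/
def CEntails (Γ : Set PForm) (φ : PForm) : Prop :=
  ∀ v : Nat → Bool, (∀ ψ ∈ Γ, ψ.eval v = true) → φ.eval v = true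

/-- `⊨_C φ`. -/
def Taut (φ : PForm) : Prop := CEntails ∅ φ

/-- A pair ⟨Σ,Γ⟩ of a belief base and a goal base. -/
structure MState : Type where
  bel : Set PForm
  goals : Set PForm

/-- The conditions making a pair ⟨Σ,Γ⟩ a mental state. -/
def IsMState (m : MState) : Prop :=
  ¬ CEntails m.bel PForm.fals ∧
  ∀ γ ∈ m.goals,
    (¬ CEntails m.bel γ ∧ ¬ Taut γ.neg) ∧
    ∀ γ' : PForm, Taut (γ.impl γ') → ¬ CEntails m.bel γ' → ¬ Taut γ'.neg →
      γ' ∈ m.goals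

/-- Mental state formulas: Boolean combinations of atoms `B φ` and `G φ`. -/
inductive MForm : Type where
  | B : PForm → MForm
  | G : PForm → MForm
  | fals : MForm
  | impl : MForm → MForm → MForm

namespace MForm

def neg (χ : MForm) : MForm := χ.impl MForm.fals
def conj (a b : MForm) : MForm := (a.impl b.neg).neg
def disj (a b : MForm) : MForm := a.neg.impl b
def iffF (a b : MForm) : MForm := (a.impl b).conj (b.impl a)

end MForm

/-- Truth of a mental state formula in a mental state: `⟨Σ,Γ⟩ ⊨_M χ`. -/
def MSat (m : MState) : MForm → Prop
  | .B φ => CEntails m.bel φ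
  | .G φ => φ ∈ m.goals
  | .fals => False
  | .impl a b => MSat m a → MSat m b

/-- `⊨_M χ`: truth in every mental state. -/
def MValid (χ : MForm) : Prop := ∀ m : MState, IsMState m → MSat m χ

/-- Auxiliary: witness formulas. -/
def pA : PForm := PForm.atom 0
def pB : PForm := PForm.atom 1

/-- Auxiliary goal base: tautological consequences of pA or of pA→pB
that are neither entailed by ∅ nor anti-tautologies. -/
def myGoals : Set PForm :=
  { γ : PForm | (Taut (pA.impl γ) ∨ Taut ((pA.impl pB).impl γ)) ∧
      ¬ CEntails ∅ γ ∧ ¬ Taut γ.neg }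

def myM : MState := ⟨∅, myGoals⟩

lemma taut_trans {a b c : PForm} (h1 : Taut (a.impl b)) (h2 : Taut (b.impl c)) :
    Taut (a.impl c) := by
  intro v hv
  have t1 := h1 v hv
  have t2 := h2 v hv
  simp [PForm.eval] at t1 t2 ⊢
  rcases t1 with h | h
  · exact Or.inl h
  · rcases t2 with h2 | h2
    · simp [h] at h2
    · exact Or.inr h2

lemma not_ent_empty {γ : PForm} (v : Nat → Bool) (h : γ.eval v = false) :
    ¬ CEntails ∅ γ := by
  intro hc
  have := hc v (by intro ψ hψ; exact absurd hψ (Set.notMem_empty ψ))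
  rw [h] at this; exact Bool.false_ne_true this

lemma not_taut_neg {γ : PForm} (v : Nat → Bool) (h : γ.eval v = true) :
    ¬ Taut γ.neg := by
  intro hc
  have := hc v (by intro ψ hψ; exact absurd hψ (Set.notMem_empty ψ))
  simp [PForm.neg, PForm.eval, h] at this

lemma myM_is : IsMState myM := by
  constructor
  · intro hc
    have := hc (fun _ => true) (by intro ψ hψ; exact absurd hψ (Set.notMem_empty ψ))
    simp [PForm.eval] at this
  · intro γ hγ
    obtain ⟨h1, h2, h3⟩ := hγ
    refine ⟨⟨h2, h3⟩, ?_⟩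
    intro γ' ht hne hnt
    refine ⟨?_, hne, hnt⟩
    rcases h1 with h | h
    · exact Or.inl (taut_trans h ht)
    · exact Or.inr (taut_trans h ht)

/-- The goal modality does not distribute over implication. -/
theorem goal_modality_not_K :
    (∃ (φ ψ : PForm) (m : MState), IsMState m ∧
      MSat m (MForm.G (φ.impl ψ)) ∧ MSat m (MForm.G φ) ∧
      ¬ MSat m (MForm.G ψ)) ∧
    ∃ φ ψ : PForm,
      ¬ MValid ((MForm.G (φ.impl ψ)).impl
        ((MForm.G φ).impl (MForm.G ψ))) := by
  have hGimp : MSat myM (MForm.G (pA.impl pB)) := by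
    show (pA.impl pB) ∈ myGoals
    refine ⟨Or.inr (by intro v hv; cases h0 : v 0 <;> cases h1 : v 1 <;> simp [pA, pB, PForm.eval, h0, h1]), ?_, ?_⟩
    · exact not_ent_empty (fun n => n == 0) (by simp [pA, pB, PForm.eval])
    · exact not_taut_neg (fun _ => true) (by simp [pA, pB, PForm.eval])
  have hGA : MSat myM (MForm.G pA) := by
    show pA ∈ myGoals
    refine ⟨Or.inl (by intro v hv; cases h0 : v 0 <;> simp [pA, PForm.eval, h0]), ?_, ?_⟩
    · exact not_ent_empty (fun _ => false) (by simp [pA, PForm.eval])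
    · exact not_taut_neg (fun _ => true) (by simp [pA, PForm.eval])
  have hGB : ¬ MSat myM (MForm.G pB) := by
    show ¬ pB ∈ myGoals
    rintro ⟨h | h, -, -⟩
    · have := h (fun n => n == 0) (by intro ψ hψ; exact absurd hψ (Set.notMem_empty ψ))
      simp [pA, pB, PForm.eval] at this
    · have := h (fun _ => false) (by intro ψ hψ; exact absurd hψ (Set.notMem_empty ψ))
      simp [pA, pB, PForm.eval] at this
  constructor
  · exact ⟨pA, pB, myM, myM_is, hGimp, hGA, hGB⟩
  · exact ⟨pA, pB, fun hv => hGB (hv myM myM_is hGimp hGA)⟩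
end

section
/- Goals are not closed under modus ponens inside a single goal: there exist propositional formulas φ, ψ and a mental state ⟨Σ,Γ⟩ such that ⟨Σ,Γ⟩ ⊨_M G(φ ∧ (φ→ψ)) but ⟨Σ,Γ⟩ ⊭_M Gψ; hence ⊭_M G(φ ∧ (φ→ψ)) → Gψ. -/
/-!
Believe `ψ` and adopt `φ ∧ (φ → ψ)` as the only primitive goal, closing it under the conditions a
mental state imposes: its classical consequences that are neither believed nor unsatisfiable. Then
`φ ∧ (φ → ψ)` is a goal (with `ψ` true and `φ` false it is not entailed by the beliefs, and it is
satisfiable), while its consequence `ψ` is not, because nothing believed can be a goal.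
-/

lemma taut_impl_iff {φ ψ : PForm} : Taut (φ.impl ψ) ↔ ∀ v, φ.eval v = true → ψ.eval v = true := by
  simp [Taut, CEntails, PForm.eval, imp_iff_not_or]

lemma Taut.impl_trans {φ ψ χ : PForm} (h₁ : Taut (φ.impl ψ)) (h₂ : Taut (ψ.impl χ)) :
    Taut (φ.impl χ) :=
  taut_impl_iff.2 fun v hv => taut_impl_iff.1 h₂ v (taut_impl_iff.1 h₁ v hv)

lemma CEntails.of_mem {Γ : Set PForm} {φ : PForm} (h : φ ∈ Γ) : CEntails Γ φ :=
  fun _ hv => hv φ h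

lemma not_cEntails_of_eval {Γ : Set PForm} {φ : PForm} (v : Nat → Bool)
    (hΓ : ∀ ψ ∈ Γ, ψ.eval v = true) (hφ : φ.eval v = false) : ¬ CEntails Γ φ :=
  fun h => by simpa [hφ] using h v hΓ

lemma not_taut_neg_of_eval {φ : PForm} (v : Nat → Bool) (hφ : φ.eval v = true) :
    ¬ Taut φ.neg :=
  not_cEntails_of_eval v (by simp) (by simp [PForm.neg, PForm.eval, hφ])

lemma IsMState.not_mem_goals_of_cEntails {m : MState} (hm : IsMState m) {φ : PForm}
    (h : CEntails m.bel φ) : φ ∉ m.goals :=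
  fun hφ => (hm.2 φ hφ).1.1 h

def generatedGoals (bel : Set PForm) (χ : PForm) : Set PForm :=
  {γ | Taut (χ.impl γ) ∧ ¬ CEntails bel γ ∧ ¬ Taut γ.neg}

lemma isMState_generatedGoals {bel : Set PForm} (hbel : ¬ CEntails bel PForm.fals) (χ : PForm) :
    IsMState ⟨bel, generatedGoals bel χ⟩ :=
  ⟨hbel, fun _ ⟨hχγ, hγ⟩ => ⟨hγ, fun _ hγγ' h₁ h₂ => ⟨hχγ.impl_trans hγγ', h₁, h₂⟩⟩⟩

lemma self_mem_generatedGoals {bel : Set PForm} {χ : PForm} (h₁ : ¬ CEntails bel χ)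
    (h₂ : ¬ Taut χ.neg) : χ ∈ generatedGoals bel χ :=
  ⟨taut_impl_iff.2 fun _ => id, h₁, h₂⟩

/-- Goals are not closed under modus ponens inside a single
goal. -/
theorem goal_not_closed_under_mp :
    (∃ (φ ψ : PForm) (m : MState), IsMState m ∧
      MSat m (MForm.G (φ.conj (φ.impl ψ))) ∧ ¬ MSat m (MForm.G ψ)) ∧
    ∃ φ ψ : PForm,
      ¬ MValid ((MForm.G (φ.conj (φ.impl ψ))).impl (MForm.G ψ)) := by
  obtain ⟨φ, ψ, m, hm, hgoal, hψ⟩ : ∃ (φ ψ : PForm) (m : MState), IsMState m ∧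
      MSat m (MForm.G (φ.conj (φ.impl ψ))) ∧ ¬ MSat m (MForm.G ψ) := by
    let bel : Set PForm := {.atom 1}
    have hbel_true : ∀ γ ∈ bel, γ.eval (fun _ => true) = true := by simp [bel, PForm.eval]
    have hbel_only1 : ∀ γ ∈ bel, γ.eval (fun n => n == 1) = true := by simp [bel, PForm.eval]
    have hm := isMState_generatedGoals (not_cEntails_of_eval _ hbel_true rfl)
      ((PForm.atom 0).conj ((PForm.atom 0).impl (.atom 1)))
    exact ⟨_, _, _, hm,
      self_mem_generatedGoals (not_cEntails_of_eval _ hbel_only1 rfl)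
        (not_taut_neg_of_eval (fun _ => true) rfl),
      hm.not_mem_goals_of_cEntails (.of_mem rfl)⟩
  exact ⟨⟨φ, ψ, m, hm, hgoal, hψ⟩, φ, ψ, fun h => hψ (h m hm hgoal)⟩
end

section
/- Individual goals cannot be conjoined: there exist propositional formulas φ, ψ and a mental state ⟨Σ,Γ⟩ such that ⟨Σ,Γ⟩ ⊨_M Gφ and ⟨Σ,Γ⟩ ⊨_M Gψ but ⟨Σ,Γ⟩ ⊭_M G(φ ∧ ψ); hence ⊭_M (Gφ ∧ Gψ) → G(φ ∧ ψ). -/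

def myState : MState :=
  ⟨∅, {γ | (Taut ((PForm.atom 0).impl γ) ∨ Taut ((PForm.atom 1).impl γ)) ∧
        ¬ Taut γ ∧ ¬ Taut γ.neg}⟩

lemma centails_empty (φ : PForm) : CEntails ∅ φ ↔ Taut φ := Iff.rfl

/-- Individual goals cannot be conjoined. -/
theorem goals_not_conjoinable :
    (∃ (φ ψ : PForm) (m : MState), IsMState m ∧
      MSat m (MForm.G φ) ∧ MSat m (MForm.G ψ) ∧
      ¬ MSat m (MForm.G (φ.conj ψ))) ∧
    ∃ φ ψ : PForm,
      ¬ MValid (((MForm.G φ).conj (MForm.G ψ)).impl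
        (MForm.G (φ.conj ψ))) := by
  have hms : IsMState myState := by
    constructor
    · intro h
      have := h (fun _ => true) (by intro ψ hψ; exact absurd hψ (Set.notMem_empty ψ))
      simp [PForm.eval] at this
    · rintro γ ⟨htaut, hnt, hnn⟩
      refine ⟨⟨hnt, hnn⟩, ?_⟩
      intro γ' himp hnt' hnn'
      refine ⟨?_, hnt', hnn'⟩
      rcases htaut with h | h
      · left
        intro v hv
        have h1 := h v hv
        have h2 := himp v hv
        simp [PForm.eval] at h1 h2 ⊢
        rcases h1 with h1 | h1 <;> rcases h2 with h2 | h2 <;> simp_all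
      · right
        intro v hv
        have h1 := h v hv
        have h2 := himp v hv
        simp [PForm.eval] at h1 h2 ⊢
        rcases h1 with h1 | h1 <;> rcases h2 with h2 | h2 <;> simp_all
  have hG0 : MSat myState (MForm.G (PForm.atom 0)) := by
    refine ⟨Or.inl fun v _ => by simp [PForm.eval], ?_, ?_⟩
    · intro h
      have := h (fun _ => false) (by simp)
      simp [PForm.eval] at this
    · intro h
      have := h (fun _ => true) (by simp)
      simp [PForm.eval, PForm.neg] at this
  have hG1 : MSat myState (MForm.G (PForm.atom 1)) := by
    refine ⟨Or.inr fun v _ => by simp [PForm.eval], ?_, ?_⟩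
    · intro h
      have := h (fun _ => false) (by simp)
      simp [PForm.eval] at this
    · intro h
      have := h (fun _ => true) (by simp)
      simp [PForm.eval, PForm.neg] at this
  have hnc : ¬ MSat myState (MForm.G ((PForm.atom 0).conj (PForm.atom 1))) := by
    rintro ⟨h, -, -⟩
    rcases h with h | h
    · have := h (fun n => n == 0) (by simp)
      simp [PForm.eval, PForm.conj, PForm.neg] at this
    · have := h (fun n => n == 1) (by simp)
      simp [PForm.eval, PForm.conj, PForm.neg] at this
  refine ⟨⟨PForm.atom 0, PForm.atom 1, myState, hms, hG0, hG1, hnc⟩,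
    PForm.atom 0, PForm.atom 1, ?_⟩
  intro h
  have := h myState hms
  simp only [MSat, MForm.conj, MForm.neg] at this
  exact hnc (this fun hc => hc hG0 hG1)
end

section
/- Soundness of the mental state calculus: for every mental state formula χ ∈ L_M, if ⊢_M χ then ⊨_M χ, i.e., every formula derivable in ⊢_M holds in all mental states. -/
/- The proof system ⊢_M. -/

/-- Evaluation of a mental state formula viewing `B φ` and `G φ` as
propositional atoms (for "instances of classical tautologies"). -/
def MForm.evalAt (vB vG : PForm → Bool) : MForm → Bool
  | .B φ => vB φ
  | .G φ => vG φ
  | .fals => false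
  | .impl a b => !(a.evalAt vB vG) || b.evalAt vB vG

/-- The system ⊢_M. -/
inductive MProv : MForm → Prop where
  | taut (χ : MForm) :
      (∀ vB vG : PForm → Bool, χ.evalAt vB vG = true) → MProv χ
  | r2 (φ : PForm) : Taut φ → MProv (.B φ)
  | a1 (φ ψ : PForm) :
      MProv ((MForm.B (φ.impl ψ)).impl ((MForm.B φ).impl (MForm.B ψ)))
  | a2 : MProv (MForm.B PForm.fals).neg
  | a3 : MProv (MForm.G PForm.fals).neg
  | a4 (φ : PForm) : MProv ((MForm.B φ).impl (MForm.G φ).neg)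
  | a5 (φ ψ : PForm) : Taut (φ.impl ψ) →
      MProv ((MForm.B ψ).neg.impl ((MForm.G φ).impl (MForm.G ψ)))
  | mp (χ₁ χ₂ : MForm) : MProv (χ₁.impl χ₂) → MProv χ₁ → MProv χ₂

open Classical in
lemma msat_iff_eval (m : MState) (χ : MForm) :
    MSat m χ ↔ χ.evalAt (fun φ => decide (CEntails m.bel φ))
      (fun φ => decide (φ ∈ m.goals)) = true := by
  induction χ with
  | B φ => simp [MSat, MForm.evalAt]
  | G φ => simp [MSat, MForm.evalAt]
  | fals => simp [MSat, MForm.evalAt]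
  | impl a b iha ihb =>
    show (MSat m a → MSat m b) ↔ _
    rw [iha, ihb]
    cases ha : MForm.evalAt _ _ a <;> cases hb : MForm.evalAt _ _ b <;>
      simp [MForm.evalAt, ha, hb]

/-- Soundness of the mental state calculus ⊢_M. -/
theorem mprov_sound : ∀ χ : MForm, MProv χ → MValid χ := by
  intro χ h
  induction h with
  | taut χ ht =>
    intro m _
    rw [msat_iff_eval]
    exact ht _ _
  | r2 φ hφ =>
    intro m _
    intro v _
    exact hφ v (by simp)
  | a1 φ ψ =>
    intro m _
    intro h1 h2 v hv
    have e1 := h1 v hv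
    have e2 := h2 v hv
    simp [PForm.eval] at e1
    rcases e1 with e1 | e1
    · rw [e1] at e2; simp at e2
    · exact e1
  | a2 =>
    intro m hm h
    exact hm.1 h
  | a3 =>
    intro m hm h
    have := (hm.2 _ h).1.2
    exact this fun v _ => by simp [PForm.neg, PForm.eval]
  | a4 φ =>
    intro m hm hB hG
    exact (hm.2 _ hG).1.1 hB
  | a5 φ ψ ht =>
    intro m hm hnB hG
    have hγ := hm.2 _ hG
    refine hγ.2 ψ ht hnB ?_
    intro hnψ
    apply hγ.1.2
    intro v hv
    have h1 := ht v hv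
    have h2 := hnψ v hv
    simp [PForm.neg, PForm.eval] at h1 h2 ⊢
    simp_all
  | mp χ₁ χ₂ h1 h2 ih1 ih2 =>
    intro m hm
    exact ih1 m hm (ih2 m hm)
end

section
/- Completeness of the mental state calculus: for every mental state formula χ ∈ L_M, if ⊨_M χ (χ holds in every mental state) then ⊢_M χ. Equivalently, every ⊢_M-consistent mental state formula is satisfied by some mental state. -/
/-!
If `¬χ` is not provable, then some propositional valuation of the `B`- and `G`-atoms satisfies
`χ` together with the finitely many axiom instances over the atoms of `χ`: the `K`-closure
instances `Bσ₁ → ⋯ → Bσₙ → Bφ` for classical consequences, `¬B⊥`, and the instances of A3–A5.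
The canonical mental state believes exactly the atoms true under the valuation, and its goals
are the consequences of the true `G`-atoms that are neither believed nor contradictory. The
`K`-instances make its beliefs agree with the valuation on the atoms of `χ`, and A3–A5 make its
goals agree with it on the `G`-atoms, so it satisfies `χ`.
-/

theorem taut_impl_self (φ : PForm) : Taut (φ.impl φ) := by
  intro v _
  simp [PForm.eval]

theorem Taut.impl_trans_s5 {a b c : PForm} (hab : Taut (a.impl b)) (hbc : Taut (b.impl c)) :
    Taut (a.impl c) := by
  intro v hv
  have hab := hab v hv
  have hbc := hbc v hv
  simp only [PForm.eval, Bool.or_eq_true, Bool.not_eq_true'] at hab hbc ⊢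
  grind

theorem CEntails.impl_of_cons {σ φ : PForm} {S : List PForm}
    (h : CEntails {x | x ∈ σ :: S} φ) : CEntails {x | x ∈ S} (σ.impl φ) := by
  intro v hv
  cases hσ : σ.eval v
  · simp [PForm.eval, hσ]
  · have hφ : φ.eval v = true := h v fun ψ hψ => by
      rcases List.mem_cons.mp hψ with rfl | hψ
      exacts [hσ, hv ψ hψ]
    simp [PForm.eval, hφ]

theorem taut_of_centails_nil {φ : PForm} (h : CEntails {x | x ∈ ([] : List PForm)} φ) :
    Taut φ :=
  fun v _ => h v (by simp)

namespace MForm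

def impList (L : List MForm) (t : MForm) : MForm :=
  L.foldr MForm.impl t

theorem evalAt_impList (L : List MForm) (t : MForm) (vB vG : PForm → Bool) :
    (impList L t).evalAt vB vG = true ↔
      ((∀ δ ∈ L, δ.evalAt vB vG = true) → t.evalAt vB vG = true) := by
  induction L with
  | nil => simp [impList]
  | cons δ L ih =>
    change (δ.impl (impList L t)).evalAt vB vG = true ↔ _
    simp only [evalAt, Bool.or_eq_true, Bool.not_eq_true', ih, List.mem_cons, forall_eq_or_imp]
    cases δ.evalAt vB vG <;> simp

def atomsB : MForm → List PForm
  | .B φ => [φ]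
  | .G _ => []
  | .fals => []
  | .impl a b => atomsB a ++ atomsB b

def atomsG : MForm → List PForm
  | .B _ => []
  | .G φ => [φ]
  | .fals => []
  | .impl a b => atomsG a ++ atomsG b

end MForm

open MForm

theorem msat_iff_evalAt (m : MState) (vB vG : PForm → Bool) :
    ∀ χ : MForm, (∀ φ ∈ atomsB χ, CEntails m.bel φ ↔ vB φ = true) →
      (∀ φ ∈ atomsG χ, φ ∈ m.goals ↔ vG φ = true) → (MSat m χ ↔ χ.evalAt vB vG = true)
  | .B φ, hB, _ => hB φ (List.mem_singleton_self φ)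
  | .G φ, _, hG => hG φ (List.mem_singleton_self φ)
  | .fals, _, _ => by simp [MSat, evalAt]
  | .impl a b, hB, hG => by
    have ha := msat_iff_evalAt m vB vG a (fun φ hφ => hB φ (List.mem_append_left _ hφ))
      (fun φ hφ => hG φ (List.mem_append_left _ hφ))
    have hb := msat_iff_evalAt m vB vG b (fun φ hφ => hB φ (List.mem_append_right _ hφ))
      (fun φ hφ => hG φ (List.mem_append_right _ hφ))
    change (MSat m a → MSat m b) ↔ (!(a.evalAt vB vG) || b.evalAt vB vG) = true
    rw [ha, hb]
    cases a.evalAt vB vG <;> simp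

namespace MProv

theorem of_premises {L : List MForm} {t : MForm} (hL : ∀ δ ∈ L, MProv δ)
    (h : ∀ vB vG, (∀ δ ∈ L, δ.evalAt vB vG = true) → t.evalAt vB vG = true) : MProv t := by
  induction L generalizing t with
  | nil => exact taut t fun vB vG => h vB vG (by simp)
  | cons δ L ih =>
    refine mp δ t (ih (fun d hd => hL d (List.mem_cons_of_mem δ hd)) fun vB vG hLv => ?_)
      (hL δ List.mem_cons_self)
    cases hδ : δ.evalAt vB vG
    · simp [evalAt, hδ]
    · have ht := h vB vG (by simpa [hδ] using hLv)
      simp [evalAt, ht]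

theorem of_finite {Δ : Set MForm} {t : MForm} (hΔ : Δ.Finite) (hprov : ∀ δ ∈ Δ, MProv δ)
    (h : ∀ vB vG, (∀ δ ∈ Δ, δ.evalAt vB vG = true) → t.evalAt vB vG = true) : MProv t :=
  of_premises (L := hΔ.toFinset.toList) (by simpa using hprov) (by simpa using h)

theorem of_neg_neg {χ : MForm} (h : MProv χ.neg.neg) : MProv χ :=
  of_premises (L := [χ.neg.neg]) (by simpa using h) fun vB vG => by
    cases hχ : χ.evalAt vB vG <;> simp [MForm.neg, evalAt, hχ]

theorem neg_G_of_taut_neg {ψ : PForm} (h : Taut ψ.neg) : MProv (G ψ).neg :=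
  of_premises (L := [(B .fals).neg.impl ((G ψ).impl (G .fals)), (B .fals).neg, (G .fals).neg])
    (by simpa using ⟨a5 ψ .fals h, a2, a3⟩) fun vB vG => by
      simp only [List.mem_cons, List.not_mem_nil, forall_eq_or_imp, MForm.neg, evalAt]
      grind

theorem impList_B_of_centails :
    ∀ (S : List PForm) (φ : PForm), CEntails {x | x ∈ S} φ → MProv (impList (S.map B) (B φ))
  | [], φ, h => r2 φ (taut_of_centails_nil h)
  | σ :: S, φ, h =>
    of_premises (L := [impList (S.map B) (B (σ.impl φ)), (B (σ.impl φ)).impl ((B σ).impl (B φ))])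
      (by simpa using ⟨impList_B_of_centails S _ h.impl_of_cons, a1 σ φ⟩) fun vB vG hL => by
        change ((B σ).impl (impList (S.map B) (B φ))).evalAt vB vG = true
        simp only [List.mem_cons, List.not_mem_nil, forall_eq_or_imp, evalAt_impList, evalAt,
          Bool.or_eq_true, Bool.not_eq_true'] at hL ⊢
        grind

end MProv

def goalClosure (bel gens : Set PForm) : Set PForm :=
  {γ | ∃ ψ ∈ gens, Taut (ψ.impl γ) ∧ ¬ CEntails bel γ ∧ ¬ Taut γ.neg}

theorem isMState_goalClosure {bel : Set PForm} (gens : Set PForm)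
    (hbel : ¬ CEntails bel PForm.fals) : IsMState ⟨bel, goalClosure bel gens⟩ := by
  refine ⟨hbel, fun γ ⟨ψ, hψ, hψγ, hbγ, hγ⟩ => ⟨⟨hbγ, hγ⟩, fun γ' hγγ' hbγ' hγ' => ?_⟩⟩
  exact ⟨ψ, hψ, hψγ.impl_trans_s5 hγγ', hbγ', hγ'⟩

/-- The instances of A2, A3, A4, A5 and of the `K`-closure of R2+A1 over the atoms `A` and
the goal atoms `Gs`. -/
def relevantAxioms (A Gs : List PForm) : Set MForm :=
  {(B .fals).neg}
  ∪ (fun ψ => (G ψ).neg) '' {ψ | ψ ∈ Gs ∧ Taut ψ.neg}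
  ∪ (fun ψ => (B ψ).impl (G ψ).neg) '' {ψ | ψ ∈ Gs}
  ∪ (fun p : PForm × PForm => (B p.2).neg.impl ((G p.1).impl (G p.2))) ''
      {p | p.1 ∈ Gs ∧ p.2 ∈ Gs ∧ Taut (p.1.impl p.2)}
  ∪ (fun p : List PForm × PForm => impList (p.1.map B) (B p.2)) ''
      {p | p.1 ∈ A.sublists ∧ p.2 ∈ PForm.fals :: A ∧ CEntails {x | x ∈ p.1} p.2}

theorem relevantAxioms_finite (A Gs : List PForm) : (relevantAxioms A Gs).Finite := by
  have hGs := List.finite_toSet Gs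
  refine ((((Set.finite_singleton _).union ?_).union ?_).union ?_).union ?_
  · exact (hGs.subset fun ψ hψ => hψ.1).image _
  · exact hGs.image _
  · exact ((hGs.prod hGs).subset fun p hp => ⟨hp.1, hp.2.1⟩).image _
  · exact (((List.finite_toSet _).prod (List.finite_toSet _)).subset
      fun p hp => ⟨hp.1, hp.2.1⟩).image _

theorem relevantAxioms_prov (A Gs : List PForm) : ∀ δ ∈ relevantAxioms A Gs, MProv δ := by
  rintro δ ((((rfl | ⟨ψ, ⟨-, hψ⟩, rfl⟩) | ⟨ψ, -, rfl⟩) | ⟨p, ⟨-, -, hp⟩, rfl⟩) | ⟨p, ⟨-, -, hp⟩, rfl⟩)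
  exacts [MProv.a2, MProv.neg_G_of_taut_neg hψ, MProv.a4 ψ, MProv.a5 _ _ hp,
    MProv.impList_B_of_centails _ _ hp]

def canonicalBel (A : List PForm) (vB : PForm → Bool) : Set PForm :=
  {σ | σ ∈ A ∧ vB σ = true}

def canonicalState (A Gs : List PForm) (vB vG : PForm → Bool) : MState :=
  ⟨canonicalBel A vB, goalClosure (canonicalBel A vB) {ψ | ψ ∈ Gs ∧ vG ψ = true}⟩

section canonicalState

variable {A Gs : List PForm} {vB vG : PForm → Bool}
  (hΔ : ∀ δ ∈ relevantAxioms A Gs, δ.evalAt vB vG = true)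
include hΔ

theorem eq_true_of_centails_canonicalBel {φ : PForm} (hφ : φ ∈ PForm.fals :: A)
    (h : CEntails (canonicalBel A vB) φ) : vB φ = true := by
  set S := A.filter fun σ => vB σ
  have hS : {x | x ∈ S} = canonicalBel A vB := by
    ext x
    simp [S, canonicalBel]
  have hK := hΔ (impList (S.map B) (B φ))
    (Or.inr ⟨(S, φ), ⟨List.mem_sublists.mpr List.filter_sublist, hφ, hS ▸ h⟩, rfl⟩)
  refine (evalAt_impList _ _ vB vG).mp hK fun δ hδ => ?_
  obtain ⟨σ, hσ, rfl⟩ := List.mem_map.mp hδ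
  simpa [evalAt] using (List.mem_filter.mp hσ).2

theorem centails_canonicalBel_iff {φ : PForm} (hφ : φ ∈ A) :
    CEntails (canonicalBel A vB) φ ↔ vB φ = true :=
  ⟨eq_true_of_centails_canonicalBel hΔ (List.mem_cons_of_mem _ hφ),
    fun h _ hv => hv φ ⟨hφ, h⟩⟩

theorem isMState_canonicalState : IsMState (canonicalState A Gs vB vG) := by
  refine isMState_goalClosure _ fun h => ?_
  have hbot := eq_true_of_centails_canonicalBel hΔ List.mem_cons_self h
  have hA2 := hΔ _ (Or.inl (Or.inl (Or.inl (Or.inl rfl))))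
  simp [MForm.neg, evalAt, hbot] at hA2

theorem mem_canonicalState_goals_iff (hGA : Gs ⊆ A) {ψ : PForm} (hψ : ψ ∈ Gs) :
    ψ ∈ (canonicalState A Gs vB vG).goals ↔ vG ψ = true := by
  constructor
  · rintro ⟨ψ₀, ⟨hψ₀, hG₀⟩, hψ₀ψ, hBψ, -⟩
    by_contra hGψ
    have hA5 := hΔ _ (Or.inl (Or.inr ⟨(ψ₀, ψ), ⟨hψ₀, hψ, hψ₀ψ⟩, rfl⟩))
    have hBψ' : vB ψ = false := by
      simpa [centails_canonicalBel_iff hΔ (hGA hψ)] using hBψ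
    simp [MForm.neg, evalAt, hG₀, hGψ, hBψ'] at hA5
  · intro hGψ
    refine ⟨ψ, ⟨hψ, hGψ⟩, taut_impl_self ψ, fun hBψ => ?_, fun hψneg => ?_⟩
    · have hA4 := hΔ _ (Or.inl (Or.inl (Or.inr ⟨ψ, hψ, rfl⟩)))
      rw [centails_canonicalBel_iff hΔ (hGA hψ)] at hBψ
      simp [MForm.neg, evalAt, hBψ, hGψ] at hA4
    · have hA3 := hΔ _ (Or.inl (Or.inl (Or.inl (Or.inr ⟨ψ, ⟨hψ, hψneg⟩, rfl⟩))))
      simp [MForm.neg, evalAt, hGψ] at hA3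

end canonicalState

theorem exists_mstate_of_not_mprov_neg (χ : MForm) (h : ¬ MProv χ.neg) :
    ∃ m : MState, IsMState m ∧ MSat m χ := by
  set A := atomsB χ ++ atomsG χ
  by_contra hno
  refine h (MProv.of_finite (relevantAxioms_finite A (atomsG χ))
    (relevantAxioms_prov A (atomsG χ)) fun vB vG hΔ => ?_)
  have hGA : atomsG χ ⊆ A := List.subset_append_right _ _
  have hsat : MSat (canonicalState A (atomsG χ) vB vG) χ ↔ χ.evalAt vB vG = true :=
    msat_iff_evalAt _ vB vG χ
      (fun φ hφ => centails_canonicalBel_iff hΔ (List.mem_append_left _ hφ))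
      (fun ψ hψ => mem_canonicalState_goals_iff hΔ hGA hψ)
  have hχ : χ.evalAt vB vG ≠ true := fun hχ =>
    hno ⟨_, isMState_canonicalState hΔ, hsat.mpr hχ⟩
  simpa [MForm.neg, evalAt] using hχ

/-- Completeness of the mental state calculus ⊢_M; equivalently,
every ⊢_M-consistent mental state formula is satisfied by some mental
state. -/
theorem mprov_complete :
    (∀ χ : MForm, MValid χ → MProv χ) ∧
    (∀ χ : MForm, ¬ MProv χ.neg → ∃ m : MState, IsMState m ∧ MSat m χ) := by
  refine ⟨fun χ hχ => ?_, exists_mstate_of_not_mprov_neg⟩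
  by_contra hnprov
  obtain ⟨m, hm, hsat⟩ :=
    exists_mstate_of_not_mprov_neg χ.neg fun h => hnprov (MProv.of_neg_neg h)
  exact hsat (hχ m hm)
end

section
/- Soundness of the enabledness calculus: for every formula χ ∈ L_ME, if ⊢_ME χ then ⊨_ME χ, i.e., χ holds at every pair consisting of a mental state and a set E ⊆ Bcap of enabled belief capabilities. -/
/- Capabilities, the language L_ME and the system ⊢_ME. -/

/-- Capabilities: belief-update capabilities, adopt and drop. -/
inductive Cap (β : Type) : Type where
  | bcap : β → Cap β
  | adopt : PForm → Cap β
  | drop : PForm → Cap β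

/-- L_ME: mental state formulas plus enabledness atoms for capabilities and
for conditional actions `ψ → do(a)` (with `ψ ∈ L_M`). -/
inductive MEForm (β : Type) : Type where
  | B : PForm → MEForm β
  | G : PForm → MEForm β
  | en : Cap β → MEForm β
  | enC : MForm → Cap β → MEForm β
  | fals : MEForm β
  | impl : MEForm β → MEForm β → MEForm β

namespace MEForm

def neg {β : Type} (χ : MEForm β) : MEForm β := χ.impl MEForm.fals
def conj {β : Type} (a b : MEForm β) : MEForm β := (a.impl b.neg).neg
def iffF {β : Type} (a b : MEForm β) : MEForm β := (a.impl b).conj (b.impl a)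

end MEForm

/-- Embedding of L_M into L_ME. -/
def mfToME {β : Type} : MForm → MEForm β
  | .B φ => .B φ
  | .G φ => .G φ
  | .fals => .fals
  | .impl a b => (mfToME a).impl (mfToME b)

/-- Enabledness of a capability relative to a mental state and a set
`E ⊆ Bcap` of enabled belief capabilities. -/
def capEnabled {β : Type} (m : MState) (E : Set β) : Cap β → Prop
  | .bcap a => a ∈ E
  | .drop _ => True
  | .adopt φ => ¬ Taut φ.neg ∧ ¬ CEntails m.bel φ

/-- Truth of an L_ME formula at a pair of a mental state and a set of
enabled belief capabilities. -/
def MESat {β : Type} (m : MState) (E : Set β) : MEForm β → Prop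
  | .B φ => CEntails m.bel φ
  | .G φ => φ ∈ m.goals
  | .en a => capEnabled m E a
  | .enC ψ a => MSat m ψ ∧ capEnabled m E a
  | .fals => False
  | .impl a b => MESat m E a → MESat m E b

/-- `⊨_ME χ`. -/
def MEValid {β : Type} (χ : MEForm β) : Prop :=
  ∀ (m : MState) (E : Set β), IsMState m → MESat m E χ

/-- Evaluation of an L_ME formula treating `B φ`, `G φ`, `enabled(a)` and
`enabled(ψ → do(a))` as propositional atoms. -/
def MEForm.evalAt {β : Type} (vB vG : PForm → Bool) (vC : Cap β → Bool)
    (vK : MForm → Cap β → Bool) : MEForm β → Bool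
  | .B φ => vB φ
  | .G φ => vG φ
  | .en a => vC a
  | .enC ψ a => vK ψ a
  | .fals => false
  | .impl a b => !(a.evalAt vB vG vC vK) || b.evalAt vB vG vC vK

/-- The system ⊢_ME. -/
inductive MEProv {β : Type} : MEForm β → Prop where
  | taut (χ : MEForm β) :
      (∀ (vB vG : PForm → Bool) (vC : Cap β → Bool)
        (vK : MForm → Cap β → Bool), χ.evalAt vB vG vC vK = true) → MEProv χ
  | r2 (φ : PForm) : Taut φ → MEProv (MEForm.B (β := β) φ)
  | a1 (φ ψ : PForm) :
      MEProv ((MEForm.B (β := β) (φ.impl ψ)).impl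
        ((MEForm.B φ).impl (MEForm.B ψ)))
  | a2 : MEProv (MEForm.B (β := β) PForm.fals).neg
  | a3 : MEProv (MEForm.G (β := β) PForm.fals).neg
  | a4 (φ : PForm) : MEProv ((MEForm.B (β := β) φ).impl (MEForm.G φ).neg)
  | a5 (φ ψ : PForm) : Taut (φ.impl ψ) →
      MEProv ((MEForm.B (β := β) ψ).neg.impl
        ((MEForm.G φ).impl (MEForm.G ψ)))
  | e1 (ψ : MForm) (a : Cap β) :
      MEProv ((MEForm.enC ψ a).iffF ((mfToME ψ).conj (MEForm.en a)))
  | e2 (φ : PForm) : MEProv (MEForm.en (β := β) (Cap.drop φ))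
  | r3 (φ : PForm) : ¬ Taut φ.neg →
      MEProv ((MEForm.B (β := β) φ).neg.iffF (MEForm.en (Cap.adopt φ)))
  | r4 (φ : PForm) : Taut φ.neg →
      MEProv (MEForm.en (β := β) (Cap.adopt φ)).neg
  | mp (χ₁ χ₂ : MEForm β) : MEProv (χ₁.impl χ₂) → MEProv χ₁ → MEProv χ₂

open Classical in
lemma mesat_eval {β : Type} (m : MState) (E : Set β) (χ : MEForm β) :
    MESat m E χ ↔ χ.evalAt (fun φ => decide (CEntails m.bel φ))
      (fun φ => decide (φ ∈ m.goals)) (fun a => decide (capEnabled m E a))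
      (fun ψ a => decide (MSat m ψ ∧ capEnabled m E a)) = true := by
  induction χ with
  | B φ => simp [MESat, MEForm.evalAt]
  | G φ => simp [MESat, MEForm.evalAt]
  | en a => simp [MESat, MEForm.evalAt]
  | enC ψ a => simp [MESat, MEForm.evalAt]
  | fals => simp [MESat, MEForm.evalAt]
  | impl a b iha ihb =>
      simp only [MESat, MEForm.evalAt, iha, ihb, Bool.or_eq_true,
        Bool.not_eq_true']
      constructor
      · intro h
        rcases Bool.eq_false_or_eq_true (MEForm.evalAt _ _ _ _ a) with h1 | h1
        · exact Or.inr (h h1)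
        · exact Or.inl h1
      · rintro (h | h) h2 <;> simp_all

lemma msat_mfToME {β : Type} (m : MState) (E : Set β) (ψ : MForm) :
    MESat m E (mfToME (β := β) ψ) ↔ MSat m ψ := by
  induction ψ with
  | B φ => simp [MESat, MSat, mfToME]
  | G φ => simp [MESat, MSat, mfToME]
  | fals => simp [MESat, MSat, mfToME]
  | impl a b iha ihb => simp [MESat, MSat, mfToME, iha, ihb]

lemma taut_falsneg : Taut PForm.fals.neg := by
  intro v _; simp [PForm.neg, PForm.eval]

/-- Soundness of the enabledness calculus ⊢_ME. -/
theorem meprov_sound (β : Type) :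
    ∀ χ : MEForm β, MEProv χ → MEValid χ := by
  intro χ h
  induction h with
  | taut χ hval =>
      intro m E hm
      rw [mesat_eval]
      exact hval _ _ _ _
  | r2 φ ht =>
      intro m E hm
      exact fun v hv => ht v (by simp)
  | a1 φ ψ =>
      intro m E hm h1 h2 v hv
      have := h1 v hv
      have := h2 v hv
      simp_all [PForm.eval]
  | a2 =>
      intro m E hm h
      exact hm.1 h
  | a3 =>
      intro m E hm h
      exact ((hm.2 _ h).1.2) taut_falsneg
  | a4 φ =>
      intro m E hm hb hg
      exact (hm.2 _ hg).1.1 hb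
  | a5 φ ψ ht =>
      intro m E hm hnb hg
      refine (hm.2 _ hg).2 ψ ht hnb ?_
      intro htn
      apply (hm.2 _ hg).1.2
      intro v hv
      have h1 := ht v hv
      have h2 := htn v hv
      simp [PForm.neg, PForm.eval] at h1 h2 ⊢
      simp_all
  | e1 ψ a =>
      intro m E hm
      simp only [MEForm.iffF, MEForm.conj, MEForm.neg, MESat, msat_mfToME]
      tauto
  | e2 φ =>
      intro m E hm
      simp [MESat, capEnabled]
  | r3 φ hnt =>
      intro m E hm
      simp only [MEForm.iffF, MEForm.conj, MEForm.neg, MESat, capEnabled]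
      tauto
  | r4 φ ht =>
      intro m E hm h
      exact h.1 ht
  | mp χ₁ χ₂ h1 h2 ih1 ih2 =>
      intro m E hm
      exact ih1 m E hm (ih2 m E hm)
end

section
/- Completeness of the enabledness calculus: for every formula χ ∈ L_ME, if ⊨_ME χ (χ holds at every pair of a mental state and a set E ⊆ Bcap of enabled belief capabilities) then ⊢_ME χ. Equivalently, every ⊢_ME-consistent L_ME-formula is satisfied by some mental state together with some E ⊆ Bcap. -/
/-! A formula that is not derivable fails under some assignment of truth values to the atoms
`B φ`, `G φ`, `enabled(a)`, `enabled(ψ → do(a))` that makes every theorem true: otherwise, by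
compactness of the space of such assignments, finitely many theorems would tautologically imply
it. Such an assignment plays the role of a maximal consistent set. Its `B`-atoms are closed under
classical consequence (by compactness again, together with A1 and R2), so reading beliefs and goals
off it gives a mental state by A2–A5, and the axioms E1, E2, R3, R4 make the `enabled` atoms agree
with their semantics there. -/

theorem exists_finset_entails_of_entails {X ι : Type*} [TopologicalSpace X] [CompactSpace X]
    {e : ι → X → Bool} (he : ∀ i, Continuous (e i)) {S : Set ι} {j : ι}
    (h : ∀ x, (∀ i ∈ S, e i x = true) → e j x = true) :
    ∃ t : Finset ι, ↑t ⊆ S ∧ ∀ x, (∀ i ∈ t, e i x = true) → e j x = true := by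
  have hclosed : ∀ i, IsClosed {x | e i x = true} := fun i =>
    (isClosed_discrete {true}).preimage (he i)
  have hcpt : IsCompact {x | e j x = false} :=
    ((isClosed_discrete {false}).preimage (he j)).isCompact
  obtain ⟨t, ht⟩ := hcpt.elim_finite_subfamily_closed (fun i : S => {x | e i x = true})
    (fun i => hclosed i) (Set.eq_empty_of_forall_notMem fun x ⟨hj, hS⟩ => by
      simp [h x fun i hi => Set.mem_iInter.mp hS ⟨i, hi⟩] at hj)
  refine ⟨t.map (Function.Embedding.subtype _), fun i hi => ?_, fun x hx => ?_⟩
  · obtain ⟨i', -, rfl⟩ := Finset.mem_map.mp hi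
    exact i'.2
  · by_contra hj
    have hx' : x ∈ {x | e j x = false} ∩ ⋂ i ∈ t, {x | e i x = true} :=
      ⟨by simpa using hj, Set.mem_iInter₂.mpr fun i hi => hx i (Finset.mem_map_of_mem _ hi)⟩
    rwa [ht] at hx'

theorem PForm.continuous_eval (φ : PForm) : Continuous fun v : Nat → Bool => φ.eval v := by
  induction φ with
  | atom n => exact continuous_apply n
  | fals => exact continuous_const
  | impl p q ihp ihq =>
    exact (continuous_of_discreteTopology (f := fun b : Bool × Bool => !b.1 || b.2)).comp
      (ihp.prodMk ihq)

theorem CEntails.exists_finset {S : Set PForm} {φ : PForm} (h : CEntails S φ) :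
    ∃ t : Finset PForm, ↑t ⊆ S ∧ CEntails ↑t φ :=
  exists_finset_entails_of_entails (e := fun (ψ : PForm) (v : Nat → Bool) => ψ.eval v)
    PForm.continuous_eval h

theorem CEntails.impl_of_insert {S : Set PForm} {ψ φ : PForm} (h : CEntails (insert ψ S) φ) :
    CEntails S (ψ.impl φ) := by
  intro v hv
  cases hψ : ψ.eval v
  · simp [PForm.eval, hψ]
  · simp only [PForm.eval, hψ, Bool.not_true, Bool.false_or]
    exact h v fun χ hχ => hχ.elim (· ▸ hψ) (hv χ)

/-- Truth assignments to the atoms `B φ`, `G φ`, `enabled(a)`, `enabled(ψ → do(a))` of `L_ME`. -/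
abbrev MEVal (β : Type) : Type :=
  (PForm → Bool) × (PForm → Bool) × (Cap β → Bool) × (MForm → Cap β → Bool)

def MEForm.eval {β : Type} (w : MEVal β) (χ : MEForm β) : Bool :=
  χ.evalAt w.1 w.2.1 w.2.2.1 w.2.2.2

namespace MEForm

variable {β : Type}

@[simp] theorem eval_B (w : MEVal β) (φ : PForm) : (B φ).eval w = w.1 φ := rfl

@[simp] theorem eval_G (w : MEVal β) (φ : PForm) : (G φ).eval w = w.2.1 φ := rfl

@[simp] theorem eval_en (w : MEVal β) (a : Cap β) : (en a).eval w = w.2.2.1 a := rfl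

@[simp] theorem eval_enC (w : MEVal β) (ψ : MForm) (a : Cap β) :
    (enC ψ a).eval w = w.2.2.2 ψ a := rfl

@[simp] theorem eval_fals (w : MEVal β) : fals.eval w = false := rfl

@[simp] theorem eval_impl (w : MEVal β) (a b : MEForm β) :
    (a.impl b).eval w = (!a.eval w || b.eval w) := rfl

@[simp] theorem eval_neg (w : MEVal β) (a : MEForm β) : a.neg.eval w = !a.eval w := by
  simp [neg]

@[simp] theorem eval_conj (w : MEVal β) (a b : MEForm β) :
    (a.conj b).eval w = (a.eval w && b.eval w) := by
  simp [conj]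

@[simp] theorem eval_iffF (w : MEVal β) (a b : MEForm β) :
    (a.iffF b).eval w = (a.eval w == b.eval w) := by
  simp only [iffF, eval_conj, eval_impl]
  cases a.eval w <;> cases b.eval w <;> rfl

theorem continuous_eval (χ : MEForm β) : Continuous fun w : MEVal β => χ.eval w := by
  induction χ with
  | B φ => exact (continuous_apply φ).comp continuous_fst
  | G φ => exact (continuous_apply φ).comp (continuous_fst.comp continuous_snd)
  | en a =>
    exact (continuous_apply a).comp (continuous_fst.comp (continuous_snd.comp continuous_snd))
  | enC ψ a =>
    exact (continuous_apply a).comp ((continuous_apply ψ).comp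
      (continuous_snd.comp (continuous_snd.comp continuous_snd)))
  | fals => exact continuous_const
  | impl a b iha ihb =>
    exact (continuous_of_discreteTopology (f := fun b : Bool × Bool => !b.1 || b.2)).comp
      (iha.prodMk ihb)

end MEForm

theorem MEProv.of_finset_entails {β : Type} {χ : MEForm β} (t : Finset (MEForm β))
    (ht : ∀ θ ∈ t, MEProv θ) (h : ∀ w, (∀ θ ∈ t, θ.eval w = true) → χ.eval w = true) :
    MEProv χ := by
  classical
  induction t using Finset.induction_on generalizing χ with
  | empty => exact .taut χ fun vB vG vC vK => h (vB, vG, vC, vK) (by simp)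
  | insert θ t _ ih =>
    refine .mp θ χ (ih (fun θ' hθ' => ht θ' (Finset.mem_insert_of_mem hθ')) fun w hw => ?_)
      (ht θ (Finset.mem_insert_self θ t))
    cases hθ : θ.eval w
    · simp [hθ]
    · simpa [hθ] using h w (by simpa [hθ] using hw)

structure TheoryVal (β : Type) where
  val : MEVal β
  eval_of_prov : ∀ θ : MEForm β, MEProv θ → θ.eval val = true

theorem TheoryVal.exists_eval_eq_false {β : Type} {χ : MEForm β} (h : ¬ MEProv χ) :
    ∃ v : TheoryVal β, χ.eval v.val = false := by
  by_contra! hall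
  obtain ⟨t, hts, ht⟩ := exists_finset_entails_of_entails MEForm.continuous_eval
    (S := {θ | MEProv θ}) (j := χ) fun w hw => by simpa using hall ⟨w, hw⟩
  exact h (MEProv.of_finset_entails t hts ht)

namespace TheoryVal

variable {β : Type} (v : TheoryVal β)

def state : MState := ⟨{φ | v.val.1 φ = true}, {φ | v.val.2.1 φ = true}⟩

def enabled : Set β := {b | v.val.2.2.1 (.bcap b) = true}

theorem believes_of_finset_entails (t : Finset PForm) (ht : ∀ ψ ∈ t, v.val.1 ψ = true)
    {φ : PForm} (h : CEntails ↑t φ) : v.val.1 φ = true := by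
  classical
  induction t using Finset.induction_on generalizing φ with
  | empty => exact v.eval_of_prov _ (.r2 φ (by simpa [Taut] using h))
  | insert ψ t _ ih =>
    have himp : v.val.1 (ψ.impl φ) = true :=
      ih (fun χ hχ => ht χ (Finset.mem_insert_of_mem hχ))
        (CEntails.impl_of_insert (by simpa using h))
    have hB := v.eval_of_prov _ (.a1 (β := β) ψ φ)
    simp only [MEForm.eval_impl, MEForm.eval_B, himp, ht ψ (Finset.mem_insert_self ψ t)] at hB
    simpa using hB

theorem believes_iff (φ : PForm) : v.val.1 φ = true ↔ CEntails v.state.bel φ := by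
  refine ⟨fun h w hw => hw φ h, fun h => ?_⟩
  obtain ⟨t, hts, ht⟩ := h.exists_finset
  exact v.believes_of_finset_entails t hts ht

theorem not_believes_fals : v.val.1 .fals = false := by
  simpa using v.eval_of_prov _ .a2

theorem not_goal_fals : v.val.2.1 .fals = false := by
  simpa using v.eval_of_prov _ .a3

theorem not_goal_of_believes {γ : PForm} (h : v.val.1 γ = true) : v.val.2.1 γ = false := by
  simpa [h] using v.eval_of_prov _ (.a4 γ)

theorem goal_of_goal_of_not_believes {γ γ' : PForm} (himp : Taut (γ.impl γ'))
    (hγ : v.val.2.1 γ = true) (hγ' : v.val.1 γ' = false) : v.val.2.1 γ' = true := by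
  simpa [hγ, hγ'] using v.eval_of_prov _ (.a5 γ γ' himp)

theorem isMState_state : IsMState v.state := by
  refine ⟨fun h => ?_, fun γ (hγ : v.val.2.1 γ = true) =>
    ⟨⟨fun h => ?_, fun h => ?_⟩, fun γ' himp hbel _ => ?_⟩⟩
  · simpa [(v.believes_iff _).mpr h] using v.not_believes_fals
  · simp [v.not_goal_of_believes ((v.believes_iff γ).mpr h)] at hγ
  · simpa [v.goal_of_goal_of_not_believes h hγ v.not_believes_fals] using v.not_goal_fals
  · exact v.goal_of_goal_of_not_believes himp hγ (by simpa [← v.believes_iff] using hbel)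

theorem capEnabled_iff (a : Cap β) :
    capEnabled v.state v.enabled a ↔ v.val.2.2.1 a = true := by
  cases a with
  | bcap b => exact Iff.rfl
  | drop φ => simpa [capEnabled] using v.eval_of_prov _ (.e2 φ)
  | adopt φ =>
    by_cases ht : Taut φ.neg
    · simpa [capEnabled, ht] using v.eval_of_prov _ (.r4 φ ht)
    · have h := v.eval_of_prov _ (.r3 φ ht)
      simp only [MEForm.eval_iffF, MEForm.eval_neg, beq_iff_eq] at h
      simp only [capEnabled, ht, not_false_eq_true, true_and, ← v.believes_iff]
      simpa using h

theorem mSat_iff (ψ : MForm) : MSat v.state ψ ↔ (mfToME ψ : MEForm β).eval v.val = true := by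
  induction ψ with
  | B φ => exact (v.believes_iff φ).symm
  | G φ => exact Iff.rfl
  | fals => simp [MSat, mfToME]
  | impl a b iha ihb => simp [MSat, mfToME, iha, ihb, Bool.or_eq_true, imp_iff_not_or]

theorem meSat_iff (χ : MEForm β) : MESat v.state v.enabled χ ↔ χ.eval v.val = true := by
  induction χ with
  | B φ => exact (v.believes_iff φ).symm
  | G φ => exact Iff.rfl
  | en a => exact v.capEnabled_iff a
  | enC ψ a =>
    have h := v.eval_of_prov _ (.e1 ψ a)
    simp only [MEForm.eval_iffF, MEForm.eval_conj, beq_iff_eq] at h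
    simp only [MESat, v.mSat_iff, v.capEnabled_iff]
    rw [show (MEForm.enC ψ a).eval v.val = _ from h]
    simp
  | fals => simp [MESat]
  | impl a b iha ihb => simp [MESat, iha, ihb, Bool.or_eq_true, imp_iff_not_or]

end TheoryVal

theorem exists_model_not_meSat_of_not_prov {β : Type} {χ : MEForm β} (h : ¬ MEProv χ) :
    ∃ (m : MState) (E : Set β), IsMState m ∧ ¬ MESat m E χ := by
  obtain ⟨v, hv⟩ := TheoryVal.exists_eval_eq_false h
  exact ⟨v.state, v.enabled, v.isMState_state, by simp [v.meSat_iff, hv]⟩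

/-- Completeness of the enabledness calculus ⊢_ME; equivalently,
every ⊢_ME-consistent L_ME-formula is satisfied by some mental state together
with some set of enabled belief capabilities. -/
theorem meprov_complete (β : Type) :
    (∀ χ : MEForm β, MEValid χ → MEProv χ) ∧
    (∀ χ : MEForm β, ¬ MEProv χ.neg →
      ∃ (m : MState) (E : Set β), IsMState m ∧ MESat m E χ) := by
  refine ⟨fun χ hχ => by_contra fun h => ?_, fun χ h => ?_⟩
  · obtain ⟨m, E, hm, hnot⟩ := exists_model_not_meSat_of_not_prov h
    exact hnot (hχ m E hm)
  · obtain ⟨m, E, hm, hnot⟩ := exists_model_not_meSat_of_not_prov h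
    exact ⟨m, E, hm, not_not.mp hnot⟩
end

section
/- Lifting Hoare triples from capabilities to conditional actions: let A = ⟨Π, Σ₀, Γ₀⟩ be a GOAL agent, a ∈ Cap, and ψ, φ, φ' ∈ L_M with b = (ψ → do(a)) ∈ Π. If the state-based Hoare triple {φ ∧ ψ} a {φ'} is true, and the mental state formula (φ ∧ ¬ψ) → φ' holds at every state s_i of every trace s ∈ S_A, then the trace-based Hoare triple {φ} b {φ'} holds for A. -/
/- The partial mental state transformer M, given a partial belief-update
function `T` on the belief capabilities. -/
open Classical in
noncomputable def MTrans {β : Type} (T : β → Set PForm → Option (Set PForm)) :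
    Cap β → MState → Option MState
  | .bcap a, m =>
      (T a m.bel).map (fun S' => MState.mk S' {ψ ∈ m.goals | ¬ CEntails S' ψ})
  | .drop φ, m => some (MState.mk m.bel {ψ ∈ m.goals | ¬ CEntails {ψ} φ})
  | .adopt φ, m =>
      if ¬ Taut φ.neg ∧ ¬ CEntails m.bel φ then
        some (MState.mk m.bel
          (m.goals ∪ {φ' : PForm | ¬ CEntails m.bel φ' ∧ Taut (φ.impl φ')}))
      else none

/-- Definedness of `T` at `(a,Σ)` depends only on `a`. -/
def TDepOnlyAct {β : Type} (T : β → Set PForm → Option (Set PForm)) : Prop :=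
  ∀ (a : β) (S1 S2 : Set PForm), (T a S1).isSome → (T a S2).isSome

/-- A conditional action `ψ → do(a)`. -/
structure CondAct (β : Type) : Type where
  cond : MForm
  act : Cap β

/-- A GOAL agent ⟨Π, Σ₀, Γ₀⟩. -/
structure Agent (β : Type) : Type where
  prog : Set (CondAct β)
  prog_nonempty : prog.Nonempty
  init : MState
  init_ms : IsMState init

/-- The computation step `m →_b m'`. -/
def StepRel {β : Type} (T : β → Set PForm → Option (Set PForm))
    (b : CondAct β) (m m' : MState) : Prop :=
  MSat m b.cond ∧ MTrans T b.act m = some m'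

/-- A conditional action is enabled in `m` iff a computation step exists. -/
def EnabledC {β : Type} (T : β → Set PForm → Option (Set PForm))
    (b : CondAct β) (m : MState) : Prop :=
  ∃ m', StepRel T b m m'

/-- A fair trace of the agent `A` starting in its initial mental state
(an element of S_A). -/
structure ATrace {β : Type} (T : β → Set PForm → Option (Set PForm))
    (A : Agent β) : Type where
  st : Nat → MState
  act : Nat → CondAct β
  st_ms : ∀ i, IsMState (st i)
  act_mem : ∀ i, act i ∈ A.prog
  step : ∀ i, StepRel T (act i) (st i) (st (i+1)) ∨
      (¬ EnabledC T (act i) (st i) ∧ st (i+1) = st i)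
  fair : ∀ b ∈ A.prog, ∀ n : Nat, ∃ i, n ≤ i ∧ act i = b
  start : st 0 = A.init

/-- The trace-based Hoare triple `{φ} b {ψ}` for a conditional action `b`,
relative to the set S_A of fair traces of the agent `A`. -/
def THoare {β : Type} (T : β → Set PForm → Option (Set PForm)) (A : Agent β)
    (φ : MForm) (b : CondAct β) (ψ : MForm) : Prop :=
  ∀ (s : ATrace T A) (i : Nat),
    MSat (s.st i) φ → s.act i = b → MSat (s.st (i+1)) ψ

/-- Truth of the state-based Hoare triple `{ρ} a {σ}` for a capability. -/
def SHoareCap {β : Type} (T : β → Set PForm → Option (Set PForm))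
    (ρ : MForm) (a : Cap β) (σ : MForm) : Prop :=
  ∀ m : MState, IsMState m → MSat m ρ →
    (∀ m', MTrans T a m = some m' → MSat m' σ) ∧
    (MTrans T a m = none → MSat m σ)

lemma msat_conj (m : MState) (a b : MForm) :
    MSat m (a.conj b) ↔ MSat m a ∧ MSat m b := by
  show ¬(MSat m a → ¬ MSat m b) ↔ _
  constructor
  · intro h
    constructor
    · by_contra hna; exact h (fun ha => absurd ha hna)
    · by_contra hnb; exact h (fun _ hb => hnb hb)
  · rintro ⟨ha, hb⟩ h; exact h ha hb

lemma msat_neg (m : MState) (a : MForm) : MSat m a.neg ↔ ¬ MSat m a := Iff.rfl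

/-- Lifting Hoare triples from capabilities to conditional
actions. -/
theorem hoare_lift (β : Type) (T : β → Set PForm → Option (Set PForm))
    (hT : TDepOnlyAct T) (A : Agent β) (a : Cap β) (ψ φ φ' : MForm)
    (hb : (CondAct.mk ψ a) ∈ A.prog)
    (h1 : SHoareCap T (φ.conj ψ) a φ')
    (h2 : ∀ (s : ATrace T A) (i : Nat),
      MSat (s.st i) ((φ.conj ψ.neg).impl φ')) :
    THoare T A φ (CondAct.mk ψ a) φ' := by
  intro s i hφ hact
  have hms := s.st_ms i
  rcases s.step i with ⟨hcond, htrans⟩ | ⟨hnen, heq⟩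
  · rw [hact] at hcond htrans
    exact (h1 _ hms ((msat_conj _ _ _).2 ⟨hφ, hcond⟩)).1 _ htrans
  · rw [heq]
    by_cases hψ : MSat (s.st i) ψ
    · have hconj := (msat_conj (s.st i) φ ψ).2 ⟨hφ, hψ⟩
      cases htr : MTrans T a (s.st i) with
      | none => exact (h1 _ hms hconj).2 htr
      | some m' =>
        exact absurd ⟨m', by rw [hact]; exact ⟨hψ, htr⟩⟩ hnen
    · exact h2 s i ((msat_conj _ _ _).2 ⟨hφ, (msat_neg _ _).2 hψ⟩)
end

section
/- Substitution Lemma for adopt: let φ ∈ L, σ ∈ L_M, and let ⟨Σ,Γ⟩ be a mental state in which adopt(φ) is enabled (i.e., ⊭_C ¬φ and Σ ⊭_C φ), and put ⟨Σ',Γ'⟩ = M(adopt(φ),⟨Σ,Γ⟩). Let σ_adopt(φ) be the result of replacing in σ every atom Gφ' such that ⊨_C φ → φ' by ¬Bφ'. Then ⟨Σ,Γ⟩ ⊨_M σ_adopt(φ) if and only if ⟨Σ',Γ'⟩ ⊨_M σ. -/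
/- Substitutions used in the Hoare calculus. -/

/- `σ_adopt(φ)`: replace every atom `G φ'` with `⊨_C φ → φ'` by `¬B φ'`. -/
open Classical in
noncomputable def adoptSubst (φ : PForm) : MForm → MForm
  | .G φ' => if Taut (φ.impl φ') then (MForm.B φ').neg else .G φ'
  | .B ψ => .B ψ
  | .fals => .fals
  | .impl a b => (adoptSubst φ a).impl (adoptSubst φ b)

/- `σ_drop(φ)`: replace every atom `G φ'` with `⊨_C φ' → φ` by `⊥`. -/
open Classical in
noncomputable def dropSubst (φ : PForm) : MForm → MForm
  | .G φ' => if Taut (φ'.impl φ) then .fals else .G φ'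
  | .B ψ => .B ψ
  | .fals => .fals
  | .impl a b => (dropSubst φ a).impl (dropSubst φ b)

/-- Substitution Lemma for adopt. -/
theorem adopt_substitution_lemma (φ : PForm) (σ : MForm) (m m' : MState)
    (hm : IsMState m) (hcons : ¬ Taut φ.neg) (hnb : ¬ CEntails m.bel φ)
    (hm' : m' = MState.mk m.bel
      (m.goals ∪ {φ' : PForm | ¬ CEntails m.bel φ' ∧ Taut (φ.impl φ')})) :
    MSat m (adoptSubst φ σ) ↔ MSat m' σ := by
  subst hm'
  induction σ with
  | B ψ => simp [adoptSubst, MSat]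
  | fals => simp [adoptSubst, MSat]
  | impl a b iha ihb => simp only [adoptSubst, MSat]; rw [iha, ihb]
  | G ψ =>
    by_cases h : Taut (φ.impl ψ)
    · simp only [adoptSubst, if_pos h, MSat, MForm.neg]
      constructor
      · intro hnc
        exact Or.inr ⟨hnc, h⟩
      · rintro (hg | ⟨hnc, _⟩) hc
        · exact ((hm.2 ψ hg).1.1 hc)
        · exact hnc hc
    · simp only [adoptSubst, if_neg h, MSat]
      constructor
      · exact Or.inl
      · rintro (hg | ⟨_, ht⟩)
        · exact hg
        · exact absurd ht h
end

section
/- Substitution Lemma for drop: let φ ∈ L, σ ∈ L_M, and ⟨Σ,Γ⟩ any mental state, and put ⟨Σ',Γ'⟩ = M(drop(φ),⟨Σ,Γ⟩). Let σ_drop(φ) be the result of replacing in σ every atom Gφ' such that ⊨_C φ' → φ by ⊥ (equivalently, replacing each such ¬Gφ' by ⊤). Then ⟨Σ,Γ⟩ ⊨_M σ_drop(φ) if and only if ⟨Σ',Γ'⟩ ⊨_M σ. -/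
lemma taut_iff_entails (ψ φ : PForm) : Taut (ψ.impl φ) ↔ CEntails {ψ} φ := by
  constructor
  · intro h v hv
    have := h v (by intro x hx; cases hx)
    simp [PForm.eval] at this
    rcases this with h1 | h1
    · rw [hv ψ rfl] at h1; cases h1
    · exact h1
  · intro h v _
    simp [PForm.eval]
    by_cases hψ : ψ.eval v = true
    · exact Or.inr (h v (by intro x hx; cases hx; exact hψ))
    · exact Or.inl (by simpa using hψ)

/-- Substitution Lemma for drop. -/
theorem drop_substitution_lemma (φ : PForm) (σ : MForm) (m m' : MState)
    (hm : IsMState m)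
    (hm' : m' = MState.mk m.bel {ψ ∈ m.goals | ¬ CEntails {ψ} φ}) :
    MSat m (dropSubst φ σ) ↔ MSat m' σ := by
  subst hm'
  induction σ with
  | B ψ => simp [dropSubst, MSat]
  | G ψ =>
    by_cases h : Taut (ψ.impl φ)
    · simp [dropSubst, h, MSat, Set.mem_setOf_eq, (taut_iff_entails ψ φ).mp h]
    · simp only [dropSubst, if_neg h, MSat, Set.mem_setOf_eq]
      exact ⟨fun hg => ⟨hg, fun hc => h ((taut_iff_entails ψ φ).mpr hc)⟩, And.left⟩
  | fals => simp [dropSubst, MSat]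
  | impl a b iha ihb => simp [dropSubst, MSat, iha, ihb]
end

section
/- Weakest Liberal Precondition Lemma: for every statement S (a capability in Cap or a conditional action ψ → do(a)) and every postcondition σ ∈ L_M, the Hoare triple {wlp(S,σ)} S {σ} is derivable in the calculus H: ⊢_H {wlp(S,σ)} S {σ}. -/
/- Statements, state-based Hoare triples, the calculus H and wlp. -/

/-- A statement: a capability or a conditional action `ψ → do(a)`. -/
inductive Stmt (β : Type) : Type where
  | cap : Cap β → Stmt β
  | cond : MForm → Cap β → Stmt β

/- Effect of a statement on a mental state (`none` = undefined;
for a conditional action whose condition fails, the state is unchanged). -/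
open Classical in
noncomputable def runStmt {β : Type} (T : β → Set PForm → Option (Set PForm)) :
    Stmt β → MState → Option MState
  | .cap a, m => MTrans T a m
  | .cond ψ a, m => if MSat m ψ then MTrans T a m else some m

/-- Truth of the state-based Hoare triple `{ρ} S {σ}` (in every mental
state). -/
def SHoareS {β : Type} (T : β → Set PForm → Option (Set PForm))
    (ρ : MForm) (S : Stmt β) (σ : MForm) : Prop :=
  ∀ m : MState, IsMState m → MSat m ρ →
    (∀ m', runStmt T S m = some m' → MSat m' σ) ∧
    (runStmt T S m = none → MSat m σ)

/- The L_M-formula `enabled(adopt(φ))`: `¬B φ` if `⊭_C ¬φ`, else `⊥`. -/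
open Classical in
noncomputable def adoptEnabledF (φ : PForm) : MForm :=
  if Taut φ.neg then .fals else (MForm.B φ).neg

/-- The Adopt precondition
`(enabled(adopt(φ)) ∧ σ_adopt(φ)) ∨ (¬enabled(adopt(φ)) ∧ σ)`. -/
noncomputable def wlpAdopt (φ : PForm) (σ : MForm) : MForm :=
  ((adoptEnabledF φ).conj (adoptSubst φ σ)).disj ((adoptEnabledF φ).neg.conj σ)

/-- The Hoare calculus ⊢_H, parametrised by the weakest liberal
preconditions `wlpB` of the belief capabilities. -/
inductive HProv {β : Type} (wlpB : β → MForm → MForm) :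
    MForm → Stmt β → MForm → Prop where
  | belief (a : β) (σ : MForm) :
      HProv wlpB (wlpB a σ) (.cap (.bcap a)) σ
  | adopt (φ : PForm) (σ : MForm) :
      HProv wlpB (wlpAdopt φ σ) (.cap (.adopt φ)) σ
  | drop (φ : PForm) (σ : MForm) :
      HProv wlpB (dropSubst φ σ) (.cap (.drop φ)) σ
  | condAct {ρ ψ σ : MForm} {a : Cap β} :
      HProv wlpB (ρ.conj ψ) (.cap a) σ → MValid ((ρ.conj ψ.neg).impl σ) →
      HProv wlpB ρ (.cond ψ a) σ
  | conseq {ρ' ρ σ σ' : MForm} {S : Stmt β} :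
      MValid (ρ'.impl ρ) → HProv wlpB ρ S σ → MValid (σ.impl σ') →
      HProv wlpB ρ' S σ'

/-- `wlpB` is a weakest liberal precondition map for the belief
capabilities. -/
def WlpBSpec {β : Type} (T : β → Set PForm → Option (Set PForm))
    (wlpB : β → MForm → MForm) : Prop :=
  ∀ (a : β) (σ : MForm) (m : MState), IsMState m →
    (MSat m (wlpB a σ) ↔
      ((∀ m', MTrans T (Cap.bcap a) m = some m' → MSat m' σ) ∧
        (MTrans T (Cap.bcap a) m = none → MSat m σ)))

/-- The weakest liberal precondition of a capability. -/
noncomputable def wlpCap {β : Type} (wlpB : β → MForm → MForm) :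
    Cap β → MForm → MForm
  | .bcap a, σ => wlpB a σ
  | .adopt φ, σ => wlpAdopt φ σ
  | .drop φ, σ => dropSubst φ σ

/-- The weakest liberal precondition `wlp(S,σ)`. -/
noncomputable def wlp {β : Type} (wlpB : β → MForm → MForm) :
    Stmt β → MForm → MForm
  | .cap a, σ => wlpCap wlpB a σ
  | .cond ψ a, σ => (ψ.conj (wlpCap wlpB a σ)).disj (ψ.neg.conj σ)

/-- Weakest Liberal Precondition Lemma:
`⊢_H {wlp(S,σ)} S {σ}`. -/
theorem wlp_hoare_derivable (β : Type)
    (T : β → Set PForm → Option (Set PForm)) (hT : TDepOnlyAct T)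
    (wlpB : β → MForm → MForm) (hw : WlpBSpec T wlpB) :
    ∀ (S : Stmt β) (σ : MForm), HProv wlpB (wlp wlpB S σ) S σ := by
  intro S σ
  have hcap : ∀ a : Cap β, HProv wlpB (wlpCap wlpB a σ) (.cap a) σ := by
    intro a
    cases a with
    | bcap a => exact HProv.belief a σ
    | adopt φ => exact HProv.adopt φ σ
    | drop φ => exact HProv.drop φ σ
  cases S with
  | cap a => exact hcap a
  | cond ψ a =>
    refine HProv.condAct (HProv.conseq ?_ (hcap a) ?_) ?_
    · intro m _
      simp only [wlp, MSat, MForm.conj, MForm.neg, MForm.disj]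
      tauto
    · intro m _; exact id
    · intro m _
      simp only [wlp, MSat, MForm.conj, MForm.neg, MForm.disj]
      tauto
end

section
/- Any true precondition implies the weakest liberal precondition: for all ρ, σ ∈ L_M and every statement S (a capability in Cap or a conditional action ψ → do(a)), if the state-based Hoare triple {ρ} S {σ} is true (holds in every mental state), then ⊨_M ρ → wlp(S,σ). -/
section Aux

lemma msat_disj (m : MState) (a b : MForm) :
    MSat m (a.disj b) ↔ MSat m a ∨ MSat m b := by
  simp [MForm.disj, MForm.neg, MSat]; tauto

lemma centails_singleton (ψ φ : PForm) :
    CEntails {ψ} φ ↔ Taut (ψ.impl φ) := by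
  constructor
  · intro h v _
    simp only [PForm.eval]
    cases hψ : ψ.eval v with
    | false => simp
    | true => simp [h v (by simp [hψ])]
  · intro h v hv
    have := h v (by simp)
    have hψ := hv ψ (by simp)
    simp only [PForm.eval, hψ] at this
    simpa using this

lemma drop_sat (φ : PForm) (σ : MForm) (m : MState) :
    MSat (MState.mk m.bel {ψ ∈ m.goals | ¬ CEntails {ψ} φ}) σ ↔
      MSat m (dropSubst φ σ) := by
  induction σ with
  | B ψ => simp [dropSubst, MSat]
  | G φ' =>
    by_cases h : Taut (φ'.impl φ)
    · simp only [dropSubst, if_pos h, MSat]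
      simp only [Set.mem_setOf_eq, centails_singleton]
      tauto
    · simp only [dropSubst, if_neg h, MSat]
      simp only [Set.mem_setOf_eq, centails_singleton]
      tauto
  | fals => simp [dropSubst, MSat]
  | impl a b iha ihb => simp only [dropSubst, MSat, iha, ihb]

lemma adopt_sat (φ : PForm) (σ : MForm) (m : MState) (hm : IsMState m) :
    MSat (MState.mk m.bel
        (m.goals ∪ {φ' : PForm | ¬ CEntails m.bel φ' ∧ Taut (φ.impl φ')})) σ ↔
      MSat m (adoptSubst φ σ) := by
  induction σ with
  | B ψ => simp [adoptSubst, MSat]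
  | G φ' =>
    by_cases h : Taut (φ.impl φ')
    · simp only [adoptSubst, if_pos h, MSat, msat_neg]
      show φ' ∈ m.goals ∪ _ ↔ _
      simp only [Set.mem_union, Set.mem_setOf_eq, MSat]
      constructor
      · rintro (hg | ⟨hc, _⟩)
        · exact ((hm.2 φ' hg).1).1
        · exact hc
      · intro hc; exact Or.inr ⟨hc, h⟩
    · simp only [adoptSubst, if_neg h, MSat]
      show φ' ∈ m.goals ∪ _ ↔ _
      simp only [Set.mem_union, Set.mem_setOf_eq]
      tauto
  | fals => simp [adoptSubst, MSat]
  | impl a b iha ihb => simp only [adoptSubst, MSat, iha, ihb]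

lemma adoptEnabled_iff (φ : PForm) (m : MState) :
    MSat m (adoptEnabledF φ) ↔ (¬ Taut φ.neg ∧ ¬ CEntails m.bel φ) := by
  by_cases h : Taut φ.neg <;>
    simp [adoptEnabledF, h, MSat, MForm.neg]

lemma wlpCap_of_sem {β : Type} (T : β → Set PForm → Option (Set PForm))
    (wlpB : β → MForm → MForm) (hw : WlpBSpec T wlpB)
    (a : Cap β) (σ : MForm) (m : MState) (hm : IsMState m)
    (h1 : ∀ m', MTrans T a m = some m' → MSat m' σ)
    (h2 : MTrans T a m = none → MSat m σ) :
    MSat m (wlpCap wlpB a σ) := by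
  cases a with
  | bcap b => exact (hw b σ m hm).2 ⟨h1, h2⟩
  | adopt φ =>
    show MSat m (wlpAdopt φ σ)
    rw [wlpAdopt, msat_disj, msat_conj, msat_conj, msat_neg, adoptEnabled_iff]
    by_cases hen : ¬ Taut φ.neg ∧ ¬ CEntails m.bel φ
    · left
      refine ⟨hen, ?_⟩
      have hdef : MTrans T (Cap.adopt φ) m = some (MState.mk m.bel
          (m.goals ∪ {φ' : PForm | ¬ CEntails m.bel φ' ∧ Taut (φ.impl φ')})) := by
        simp [MTrans, hen]
      exact (adopt_sat φ σ m hm).1 (h1 _ hdef)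
    · right
      refine ⟨hen, ?_⟩
      have hundef : MTrans T (Cap.adopt φ) m = none := by
        simp [MTrans, hen]
      exact h2 hundef
  | drop φ =>
    show MSat m (dropSubst φ σ)
    have hdef : MTrans T (Cap.drop φ) m =
        some (MState.mk m.bel {ψ ∈ m.goals | ¬ CEntails {ψ} φ}) := rfl
    exact (drop_sat φ σ m).1 (h1 _ hdef)

end Aux

/-- Any true precondition implies the weakest liberal
precondition. -/
theorem true_pre_implies_wlp (β : Type)
    (T : β → Set PForm → Option (Set PForm)) (hT : TDepOnlyAct T)
    (wlpB : β → MForm → MForm) (hw : WlpBSpec T wlpB) :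
    ∀ (ρ σ : MForm) (S : Stmt β),
      SHoareS T ρ S σ → MValid (ρ.impl (wlp wlpB S σ)) := by
  intro ρ σ S h m hm
  show MSat m ρ → MSat m (wlp wlpB S σ)
  intro hρ
  have hs := h m hm hρ
  cases S with
  | cap a =>
    exact wlpCap_of_sem T wlpB hw a σ m hm hs.1 hs.2
  | cond ψ a =>
    show MSat m ((ψ.conj (wlpCap wlpB a σ)).disj (ψ.neg.conj σ))
    rw [msat_disj, msat_conj, msat_conj, msat_neg]
    by_cases hψ : MSat m ψ
    · left
      refine ⟨hψ, wlpCap_of_sem T wlpB hw a σ m hm ?_ ?_⟩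
      · intro m' hm'
        exact hs.1 m' (by simpa [runStmt, hψ] using hm')
      · intro hn
        exact hs.2 (by simpa [runStmt, hψ] using hn)
    · right
      exact ⟨hψ, hs.1 m (by simp [runStmt, hψ])⟩
end

section
/- Characterisation of unless by Hoare triples: let A = ⟨Π, Σ₀, Γ₀⟩ be a GOAL agent and φ, ψ ∈ L_M. Then the trace-based Hoare triple {φ ∧ ¬ψ} b {φ ∨ ψ} holds for A for every b ∈ Π if and only if S_A ⊨ φ unless ψ. -/
/- Temporal formulas over mental state formulas and their semantics on
traces. -/

/-- Temporal formulas: mental state formulas closed under Boolean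
connectives and weak until. -/
inductive TForm : Type where
  | mf : MForm → TForm
  | fals : TForm
  | impl : TForm → TForm → TForm
  | untl : TForm → TForm → TForm

namespace TForm

def neg (a : TForm) : TForm := a.impl TForm.fals
def conj (a b : TForm) : TForm := (a.impl b.neg).neg
def box (a : TForm) : TForm := a.untl TForm.fals
def diam (a : TForm) : TForm := (a.neg.box).neg
def unlessF (a b : TForm) : TForm := a.impl (a.untl b)
def ensuresF (a b : TForm) : TForm := (a.unlessF b).conj (a.impl b.diam)

end TForm

/-- `s,i ⊨ χ` for a trace `s`. -/
def TSat {β : Type} {T : β → Set PForm → Option (Set PForm)} {A : Agent β}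
    (s : ATrace T A) : TForm → Nat → Prop
  | .mf χ, i => MSat (s.st i) χ
  | .fals, _ => False
  | .impl a b, i => TSat s a i → TSat s b i
  | .untl a b, i =>
      (∃ j, i ≤ j ∧ TSat s b j ∧ ∀ k, i ≤ k → k < j → TSat s a k) ∨
      (∀ k, i ≤ k → TSat s a k)

/-- `S_A ⊨ χ`. -/
def SASat {β : Type} (T : β → Set PForm → Option (Set PForm)) (A : Agent β)
    (χ : TForm) : Prop :=
  ∀ (s : ATrace T A) (i : Nat), TSat s χ i

/-- Characterisation of unless by Hoare triples. -/
theorem unless_characterisation (β : Type)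
    (T : β → Set PForm → Option (Set PForm)) (hT : TDepOnlyAct T)
    (A : Agent β) (φ ψ : MForm) :
    (∀ b ∈ A.prog, THoare T A (φ.conj ψ.neg) b (φ.disj ψ)) ↔
      SASat T A ((TForm.mf φ).unlessF (TForm.mf ψ)) := by
  constructor
  · intro H s i
    intro hφ
    simp only [TSat] at hφ ⊢
    have key : ∀ n : Nat, (∀ m ≤ n, ¬ MSat (s.st (i+m)) ψ) →
        MSat (s.st (i+n)) φ := by
      intro n
      induction n with
      | zero => intro _; simpa using hφ
      | succ n ih =>
        intro h
        have hφn := ih (fun m hm => h m (Nat.le_succ_of_le hm))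
        have hψn : ¬ MSat (s.st (i+n)) ψ := h n (Nat.le_succ n)
        have hpre : MSat (s.st (i+n)) (φ.conj ψ.neg) := by
          intro f; exact f hφn (fun hψ => hψn hψ)
        have hdisj := H (s.act (i+n)) (s.act_mem (i+n)) s (i+n) hpre rfl
        have hψn1 : ¬ MSat (s.st (i+(n+1))) ψ := h (n+1) le_rfl
        by_contra hφn1
        exact hψn1 (hdisj (fun hφ' => hφn1 (by
          show MSat (s.st (i+(n+1))) φ
          exact (by simpa [Nat.add_assoc] using hφ'))))
    by_cases hex : ∃ j, i ≤ j ∧ MSat (s.st j) ψ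
    · obtain ⟨j, hj⟩ := hex
      -- take least such j
      have hexn : ∃ n : Nat, MSat (s.st (i+n)) ψ := by
        refine ⟨j - i, ?_⟩
        have : i + (j - i) = j := Nat.add_sub_cancel' hj.1
        rw [this]; exact hj.2
      classical
      let n0 := Nat.find hexn
      left
      refine ⟨i + n0, Nat.le_add_right _ _, Nat.find_spec hexn, ?_⟩
      intro k hik hkj
      have hk : i + (k - i) = k := Nat.add_sub_cancel' hik
      rw [← hk]
      apply key
      intro m hm
      have : i + m < i + n0 := by omega
      exact Nat.find_min hexn (by omega)
    · right
      intro k hik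
      have hk : i + (k - i) = k := Nat.add_sub_cancel' hik
      rw [← hk]
      apply key
      intro m _
      exact fun hψ => hex ⟨i + m, Nat.le_add_right _ _, hψ⟩
  · intro Hu b hb s i hpre _
    have hφ : MSat (s.st i) φ := by
      by_contra h
      exact hpre (fun hφ' _ => absurd hφ' h)
    have hnψ : ¬ MSat (s.st i) ψ := fun hψ => hpre (fun _ g => g hψ)
    have huntl := Hu s i hφ
    simp only [TSat] at huntl
    rcases huntl with ⟨j, hij, hψj, hall⟩ | hall
    · rcases Nat.lt_or_ge j (i+1) with hj | hj
      · have hji : j = i := by omega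
        subst hji
        exact absurd hψj hnψ
      · rcases Nat.eq_or_lt_of_le hj with hj' | hj'
        · intro _; rw [hj']; exact hψj
        · have hφ1 := hall (i+1) (Nat.le_succ i) hj'
          intro h; exact absurd hφ1 h
    · have hφ1 := hall (i+1) (Nat.le_succ i)
      intro h; exact absurd hφ1 h
end

section
/- Hoare-triple criterion for ensures: let A = ⟨Π, Σ₀, Γ₀⟩ be a GOAL agent and φ, ψ ∈ L_M. If the trace-based Hoare triple {φ ∧ ¬ψ} b {φ ∨ ψ} holds for A for every b ∈ Π, and the trace-based Hoare triple {φ ∧ ¬ψ} b' {ψ} holds for A for some b' ∈ Π, then S_A ⊨ φ ensures ψ. -/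
/-- Hoare-triple criterion for ensures. -/
theorem ensures_criterion (β : Type)
    (T : β → Set PForm → Option (Set PForm)) (hT : TDepOnlyAct T)
    (A : Agent β) (φ ψ : MForm)
    (h1 : ∀ b ∈ A.prog, THoare T A (φ.conj ψ.neg) b (φ.disj ψ))
    (h2 : ∃ b ∈ A.prog, THoare T A (φ.conj ψ.neg) b ψ) :
    SASat T A ((TForm.mf φ).ensuresF (TForm.mf ψ)) := by
  classical
  intro s i0
  -- step invariance
  have step : ∀ (i : Nat), MSat (s.st i) φ → ¬ MSat (s.st i) ψ →
      ¬ MSat (s.st (i+1)) ψ → MSat (s.st (i+1)) φ := by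
    intro i hphi hpsi hpsi'
    have h : MSat (s.st (i+1)) (φ.disj ψ) :=
      h1 (s.act i) (s.act_mem i) s i (fun h => h hphi hpsi) rfl
    by_contra hnφ
    exact hpsi' (h hnφ)
  have hchain : ∀ (i : Nat), MSat (s.st i) φ → ∀ m,
      (∀ k, k ≤ m → ¬ MSat (s.st (i+k)) ψ) → MSat (s.st (i+m)) φ := by
    intro i hphi m
    induction m with
    | zero => intro _; exact hphi
    | succ m ih =>
      intro h
      have hφm := ih (fun k hk => h k (le_trans hk (Nat.le_succ m)))
      exact step (i+m) hφm (h m (Nat.le_succ m)) (h (m+1) le_rfl)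
  have progress : ∀ (i : Nat), MSat (s.st i) φ →
      ∃ j, i ≤ j ∧ MSat (s.st j) ψ ∧ ∀ k, i ≤ k → k < j → MSat (s.st k) φ := by
    intro i hphi
    have hex : ∃ j, i ≤ j ∧ MSat (s.st j) ψ := by
      by_contra hc
      push_neg at hc
      obtain ⟨b', hb'mem, hb'⟩ := h2
      obtain ⟨j0, hj0, hact⟩ := s.fair b' hb'mem i
      have hφj0 : MSat (s.st j0) φ := by
        have := hchain i hphi (j0 - i) (fun k _ => hc (i+k) (Nat.le_add_right i k))
        rwa [Nat.add_sub_cancel' hj0] at this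
      have := hb' s j0 (fun h => h hφj0 (hc j0 hj0)) hact
      exact hc (j0+1) (le_trans hj0 (Nat.le_succ j0)) this
    let P : Nat → Prop := fun j => i ≤ j ∧ MSat (s.st j) ψ
    have hP : ∃ j, P j := hex
    refine ⟨Nat.find hP, (Nat.find_spec hP).1, (Nat.find_spec hP).2, ?_⟩
    intro k hik hk
    have hno : ∀ m, m ≤ k - i → ¬ MSat (s.st (i+m)) ψ := by
      intro m hm hpsi
      have him : i + m ≤ k := by omega
      exact Nat.find_min hP (lt_of_le_of_lt him hk) ⟨Nat.le_add_right i m, hpsi⟩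
    have := hchain i hphi (k - i) hno
    rwa [Nat.add_sub_cancel' hik] at this
  -- now the ensures formula
  intro h
  apply h
  · -- unless
    intro hphi
    obtain ⟨j, hij, hψj, hφk⟩ := progress i0 hphi
    exact Or.inl ⟨j, hij, hψj, hφk⟩
  · -- φ → ◇ψ
    intro hphi hbox
    cases hbox with
    | inl h' => obtain ⟨j, _, hf, _⟩ := h'; exact hf
    | inr h' =>
      obtain ⟨j, hij, hψj, _⟩ := progress i0 hphi
      exact h' j hij hψj
end

section
/- Soundness of the leads-to operator: let A be a GOAL agent and define the relation ↦ on mental state formulas (relative to S_A) as the least relation such that (a) φ ↦ ψ whenever S_A ⊨ φ ensures ψ, (b) φ ↦ ψ whenever φ ↦ χ and χ ↦ ψ for some χ, and (c) (φ₁ ∨ ⋯ ∨ φ_n) ↦ ψ whenever φ_i ↦ ψ for each 1 ≤ i ≤ n. Then for all mental state formulas φ, ψ: φ ↦ ψ implies S_A ⊨ φ → ◇ψ. -/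
/-- Iterated disjunction `φ₁ ∨ ⋯ ∨ φ_n` of a nonempty list of mental state
formulas. -/
def bigOr : MForm → List MForm → MForm
  | φ, [] => φ
  | φ, χ :: l => φ.disj (bigOr χ l)

/-- The leads-to relation ↦ relative to the traces of the agent `A`: the
least relation closed under (a) ensures, (b) transitivity and
(c) disjunction. -/
inductive LeadsTo {β : Type} (T : β → Set PForm → Option (Set PForm))
    (A : Agent β) : MForm → MForm → Prop where
  | ensures {φ ψ : MForm} :
      SASat T A ((TForm.mf φ).ensuresF (TForm.mf ψ)) → LeadsTo T A φ ψ
  | trans {φ χ ψ : MForm} :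
      LeadsTo T A φ χ → LeadsTo T A χ ψ → LeadsTo T A φ ψ
  | disj {φ : MForm} {l : List MForm} {ψ : MForm} :
      LeadsTo T A φ ψ → (∀ χ ∈ l, LeadsTo T A χ ψ) →
      LeadsTo T A (bigOr φ l) ψ

theorem MSat_bigOr_iff (m : MState) (φ : MForm) (l : List MForm) :
    MSat m (bigOr φ l) ↔ MSat m φ ∨ ∃ χ ∈ l, MSat m χ := by
  induction l generalizing φ with
  | nil => simp [bigOr]
  | cons χ l ih =>
    simp only [bigOr, MForm.disj, MForm.neg, MSat, ih, List.mem_cons,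
      exists_eq_or_imp]
    tauto

section Traces

variable {β : Type} {T : β → Set PForm → Option (Set PForm)} {A : Agent β}

theorem TSat_diam_iff (s : ATrace T A) (a : TForm) (i : Nat) :
    TSat s a.diam i ↔ ∃ j, i ≤ j ∧ TSat s a j := by
  simp only [TForm.diam, TForm.box, TForm.neg, TSat]
  constructor
  · intro h
    by_contra hc
    push Not at hc
    exact h (Or.inr hc)
  · rintro ⟨j, hij, hj⟩ (⟨_, _, hfalse, _⟩ | hnever)
    · exact hfalse
    · exact hnever j hij hj

theorem TSat_impl_diam_of_ensuresF (s : ATrace T A) (a b : TForm) (i : Nat)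
    (h : TSat s (a.ensuresF b) i) : TSat s (a.impl b.diam) i := by
  simp only [TForm.ensuresF, TForm.conj, TForm.neg, TSat] at h ⊢
  tauto

theorem SASat_impl_diam_trans {a b c : TForm}
    (hab : SASat T A (a.impl b.diam)) (hbc : SASat T A (b.impl c.diam)) :
    SASat T A (a.impl c.diam) := by
  intro s i ha
  obtain ⟨j, hij, hb⟩ := (TSat_diam_iff s b i).mp (hab s i ha)
  obtain ⟨k, hjk, hc⟩ := (TSat_diam_iff s c j).mp (hbc s j hb)
  exact (TSat_diam_iff s c i).mpr ⟨k, hij.trans hjk, hc⟩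

theorem SASat_bigOr_impl_diam {φ ψ : MForm} {l : List MForm}
    (hφ : SASat T A ((TForm.mf φ).impl (TForm.mf ψ).diam))
    (hl : ∀ χ ∈ l, SASat T A ((TForm.mf χ).impl (TForm.mf ψ).diam)) :
    SASat T A ((TForm.mf (bigOr φ l)).impl (TForm.mf ψ).diam) := by
  intro s i hor
  rcases (MSat_bigOr_iff _ φ l).mp hor with hφi | ⟨χ, hχ, hχi⟩
  · exact hφ s i hφi
  · exact hl χ hχ s i hχi

end Traces

theorem leadsto_sound_general (β : Type)
    (T : β → Set PForm → Option (Set PForm))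
    (A : Agent β) :
    ∀ φ ψ : MForm, LeadsTo T A φ ψ →
      SASat T A ((TForm.mf φ).impl (TForm.mf ψ).diam) := by
  intro φ ψ h
  induction h with
  | ensures hens => exact fun s i => TSat_impl_diam_of_ensuresF s _ _ i (hens s i)
  | trans _ _ ih₁ ih₂ => exact SASat_impl_diam_trans ih₁ ih₂
  | disj _ _ ih ihl => exact SASat_bigOr_impl_diam ih ihl

/-- Soundness of the leads-to operator. -/
theorem leadsto_sound (β : Type)
    (T : β → Set PForm → Option (Set PForm)) (hT : TDepOnlyAct T)
    (A : Agent β) :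
    ∀ φ ψ : MForm, LeadsTo T A φ ψ →
      SASat T A ((TForm.mf φ).impl (TForm.mf ψ).diam) :=
  leadsto_sound_general β T A
end

section
/- Persistence of the absence of a goal: for every GOAL agent A = ⟨Π, Σ₀, Γ₀⟩, every conditional action b ∈ Π, and every φ ∈ L, the trace-based Hoare triple {¬Gφ} b {¬Bφ ∨ ¬Gφ} holds for A; that is, if φ is not a goal in some state of a trace of A, then after the next step either φ is not believed or φ is (still) not a goal. -/
/-- Persistence of the absence of a goal:
`{¬Gφ} b {¬Bφ ∨ ¬Gφ}` holds for every conditional action of the agent. -/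
theorem absence_of_goal_persists (β : Type)
    (T : β → Set PForm → Option (Set PForm)) (hT : TDepOnlyAct T)
    (A : Agent β) :
    ∀ b ∈ A.prog, ∀ φ : PForm,
      THoare T A (MForm.G φ).neg b
        ((MForm.B φ).neg.disj (MForm.G φ).neg) := by
  intro b hb φ s i hG hbi
  rcases s.step i with ⟨hcond, hM⟩ | ⟨_, heq⟩
  · rw [hbi] at hM
    cases hact : b.act with
    | bcap a =>
      rw [hact] at hM
      simp only [MTrans] at hM
      rcases Option.map_eq_some_iff.mp hM with ⟨S', hS', hmk⟩
      intro _ hmem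
      rw [← hmk] at hmem
      exact hG hmem.1
    | adopt χ =>
      rw [hact] at hM
      simp only [MTrans] at hM
      split at hM
      · intro hB hmem
        have h1 : s.st (i+1) = MState.mk (s.st i).bel
            ((s.st i).goals ∪ {φ' : PForm | ¬ CEntails (s.st i).bel φ' ∧ Taut (χ.impl φ')}) :=
          (Option.some.inj hM).symm
        rw [h1] at hmem hB
        rcases hmem with h | h
        · exact hG h
        · exact hB h.1
      · simp at hM
    | drop χ =>
      rw [hact] at hM
      simp only [MTrans] at hM
      intro _ hmem
      rw [← Option.some.inj hM] at hmem
      exact hG hmem.1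
  · rw [heq]
    intro _ hmem
    exact hG hmem
end
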